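/- (Fuchs–van de Graaf inequalities) For density matrices ρ₀ and ρ₁, it holds that 1 − F(ρ₀,ρ₁) ≤ T(ρ₀,ρ₁) ≤ √(1 − F²(ρ₀,ρ₁)). -/

import Mathlib

open Matrix ComplexOrder
open scoped Matrix.Norms.L2Operator Kronecker

noncomputable section

variable {m : Type*} [Fintype m] [DecidableEq m]

/-- A density matrix: positive semidefinite with unit trace. -/
def IsDensity (ρ : Matrix m m ℂ) : Prop := ρ.PosSemidef ∧ ρ.trace = 1

/-- The square root of a positive semidefinite matrix (as in the older Mathlib). -/
def Matrix.PosSemidef.sqrt {A : Matrix m m ℂ} (hA : A.PosSemidef) : Matrix m m ℂ :=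
  hA.1.eigenvectorUnitary.1 * diagonal ((RCLike.ofReal : ℝ → ℂ) ∘ (√·) ∘ hA.1.eigenvalues) *
    (star hA.1.eigenvectorUnitary : Matrix m m ℂ)

/-- The trace norm `‖A‖₁ = Tr √(AᴴA)`. -/
def traceNorm (A : Matrix m m ℂ) : ℝ :=
  ((Matrix.posSemidef_conjTranspose_mul_self A).sqrt).trace.re

/-- The trace distance `T(ρ,σ) = ‖ρ − σ‖₁ / 2`. -/
def traceDist (ρ σ : Matrix m m ℂ) : ℝ := traceNorm (ρ - σ) / 2

/-- The fidelity `F(ρ,σ) = ‖√ρ √σ‖₁`. -/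
def fid {ρ σ : Matrix m m ℂ} (hρ : ρ.PosSemidef) (hσ : σ.PosSemidef) : ℝ :=
  traceNorm (hρ.sqrt * hσ.sqrt)

/-- The sign function applied to a Hermitian matrix via its spectral decomposition. -/
def signMat {A : Matrix m m ℂ} (hA : A.IsHermitian) : Matrix m m ℂ :=
  hA.cfc (fun x => Real.sign x)

/-- The outer product `|ψ⟩⟨φ|`. -/
def outer (ψ φ : m → ℂ) : Matrix m m ℂ := Matrix.vecMulVec ψ (star φ)

variable {α β : Type*} [Fintype α] [DecidableEq α] [Fintype β] [DecidableEq β]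

/-- Partial trace over the first (A) factor. -/
def ptraceA (M : Matrix (α × β) (α × β) ℂ) : Matrix β β ℂ :=
  Matrix.of fun r r' => ∑ a, M (a, r) (a, r')

/-- Partial trace over the second (R) factor. -/
def ptraceR (M : Matrix (α × β) (α × β) ℂ) : Matrix α α ℂ :=
  Matrix.of fun a a' => ∑ r, M (a, r) (a', r)

namespace FvdG
open Matrix ComplexOrder

variable {A : Matrix m m ℂ} (hA : A.IsHermitian)

omit [Fintype m] in lemma diag_congr {f g : m → ℂ} (h : ∀ i, f i = g i) : diagonal f = diagonal g := by
  rw [funext h]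

lemma star_mul_self_eq_one : (star hA.eigenvectorUnitary : Matrix m m ℂ) * hA.eigenvectorUnitary = 1 :=
  Unitary.coe_star_mul_self hA.eigenvectorUnitary

lemma mul_star_self_eq_one : (hA.eigenvectorUnitary : Matrix m m ℂ) * (star hA.eigenvectorUnitary : Matrix m m ℂ) = 1 :=
  Unitary.coe_mul_star_self hA.eigenvectorUnitary

lemma cfc_mul (f g : ℝ → ℝ) : hA.cfc f * hA.cfc g = hA.cfc (fun x => f x * g x) := by
  unfold Matrix.IsHermitian.cfc
  simp only [Unitary.conjStarAlgAut_apply]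
  calc (hA.eigenvectorUnitary : Matrix m m ℂ) * diagonal (RCLike.ofReal ∘ f ∘ hA.eigenvalues) *
        (star hA.eigenvectorUnitary : Matrix m m ℂ) *
        ((hA.eigenvectorUnitary : Matrix m m ℂ) * diagonal (RCLike.ofReal ∘ g ∘ hA.eigenvalues) *
        (star hA.eigenvectorUnitary : Matrix m m ℂ))
      = (hA.eigenvectorUnitary : Matrix m m ℂ) * (diagonal (RCLike.ofReal ∘ f ∘ hA.eigenvalues) *
        (((star hA.eigenvectorUnitary : Matrix m m ℂ) * (hA.eigenvectorUnitary : Matrix m m ℂ)) *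
          diagonal (RCLike.ofReal ∘ g ∘ hA.eigenvalues))) *
        (star hA.eigenvectorUnitary : Matrix m m ℂ) := by
        simp only [mul_assoc]
    _ = _ := by
        rw [star_mul_self_eq_one hA, one_mul, diagonal_mul_diagonal]
        congr 2
        exact diag_congr fun i => by simp

lemma cfc_one : hA.cfc (fun _ => 1) = 1 := by
  unfold Matrix.IsHermitian.cfc
  simp only [Unitary.conjStarAlgAut_apply]
  have : diagonal (RCLike.ofReal ∘ (fun _ : ℝ => (1:ℝ)) ∘ hA.eigenvalues) = (1 : Matrix m m ℂ) := by
    rw [← diagonal_one]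
    exact diag_congr fun i => by simp
  rw [this, mul_one, mul_star_self_eq_one hA]

lemma cfc_add (f g : ℝ → ℝ) : hA.cfc f + hA.cfc g = hA.cfc (fun x => f x + g x) := by
  unfold Matrix.IsHermitian.cfc
  simp only [Unitary.conjStarAlgAut_apply]
  rw [← add_mul, ← mul_add]
  congr 2
  rw [diagonal_add]
  exact diag_congr fun i => by simp

lemma cfc_id : hA.cfc (fun x => x) = A := by
  unfold Matrix.IsHermitian.cfc
  simp only [Unitary.conjStarAlgAut_apply]
  exact hA.spectral_theorem.symm

lemma cfc_hermitian (f : ℝ → ℝ) : (hA.cfc f).IsHermitian := by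
  unfold Matrix.IsHermitian.cfc
  simp only [Unitary.conjStarAlgAut_apply]
  unfold Matrix.IsHermitian
  rw [conjTranspose_mul, conjTranspose_mul, diagonal_conjTranspose, ← star_eq_conjTranspose,
    ← star_eq_conjTranspose, star_star, mul_assoc]
  congr 2
  exact diag_congr fun i => by simp [Pi.star_def, Function.comp_def]

lemma cfc_posSemidef (f : ℝ → ℝ) (hf : ∀ x, 0 ≤ f x) : (hA.cfc f).PosSemidef := by
  unfold Matrix.IsHermitian.cfc
  simp only [Unitary.conjStarAlgAut_apply]
  rw [star_eq_conjTranspose]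
  apply PosSemidef.mul_mul_conjTranspose_same
  refine posSemidef_diagonal_iff.mpr fun i => ?_
  rw [Function.comp_apply, RCLike.nonneg_iff]
  constructor
  · simpa using hf _
  · simp

lemma cfc_congr {f g : ℝ → ℝ} (h : ∀ i, f (hA.eigenvalues i) = g (hA.eigenvalues i)) :
    hA.cfc f = hA.cfc g := by
  unfold Matrix.IsHermitian.cfc
  simp only [Unitary.conjStarAlgAut_apply]
  congr 2
  exact diag_congr fun i => by simp [h i]

lemma trace_cfc (f : ℝ → ℝ) : (hA.cfc f).trace = ∑ i, (f (hA.eigenvalues i) : ℂ) := by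
  unfold Matrix.IsHermitian.cfc
  simp only [Unitary.conjStarAlgAut_apply]
  rw [trace_mul_cycle, star_mul_self_eq_one hA, one_mul, trace_diagonal]
  simp

lemma sqrt_eq_cfc {A : Matrix m m ℂ} (hA : A.PosSemidef) : hA.sqrt = hA.1.cfc Real.sqrt := rfl

lemma cfc_sq (f : ℝ → ℝ) : (hA.cfc f) ^ 2 = hA.cfc (fun x => f x * f x) := by
  rw [pow_two, cfc_mul]



variable {A : Matrix m m ℂ} (hA : A.IsHermitian)

/-- column i of the eigenvector unitary -/
def evec (hA : A.IsHermitian) (i : m) : m → ℂ := ⇑(hA.eigenvectorBasis i)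

lemma entry_conj (E : Matrix m m ℂ) (i : m) :
    ((star hA.eigenvectorUnitary : Matrix m m ℂ) * E * (hA.eigenvectorUnitary : Matrix m m ℂ)) i i
      = star (evec hA i) ⬝ᵥ E *ᵥ evec hA i := by
  simp only [mul_apply, dotProduct, mulVec, star_apply, evec, Pi.star_apply,
    IsHermitian.eigenvectorUnitary_apply, Finset.sum_mul, Finset.mul_sum]
  rw [Finset.sum_comm]
  exact Finset.sum_congr rfl fun k _ => Finset.sum_congr rfl fun j _ => by ring

lemma evec_unit (i : m) : star (evec hA i) ⬝ᵥ evec hA i = 1 := by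
  have h := entry_conj hA 1 i
  rw [mul_one, one_mulVec] at h
  rw [← h]
  have h2 : (star hA.eigenvectorUnitary : Matrix m m ℂ) * hA.eigenvectorUnitary = 1 :=
    Unitary.coe_star_mul_self hA.eigenvectorUnitary
  rw [h2, one_apply_eq]

lemma trace_eq_sum_quad (E : Matrix m m ℂ) :
    E.trace = ∑ i, star (evec hA i) ⬝ᵥ E *ᵥ evec hA i := by
  have h2 : (hA.eigenvectorUnitary : Matrix m m ℂ) * (star hA.eigenvectorUnitary : Matrix m m ℂ) = 1 :=
    Unitary.coe_mul_star_self hA.eigenvectorUnitary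
  have : ((star hA.eigenvectorUnitary : Matrix m m ℂ) * E * (hA.eigenvectorUnitary : Matrix m m ℂ)).trace = E.trace := by
    rw [trace_mul_cycle, h2, one_mul]
  rw [← this, trace]
  exact Finset.sum_congr rfl fun i _ => entry_conj hA E i

lemma trace_mul_cfc (E : Matrix m m ℂ) (f : ℝ → ℝ) :
    (E * hA.cfc f).trace
      = ∑ i, (f (hA.eigenvalues i) : ℂ) * (star (evec hA i) ⬝ᵥ E *ᵥ evec hA i) := by
  unfold Matrix.IsHermitian.cfc
  simp only [Unitary.conjStarAlgAut_apply]
  have : E * ((hA.eigenvectorUnitary : Matrix m m ℂ) * diagonal (RCLike.ofReal ∘ f ∘ hA.eigenvalues)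
      * (star hA.eigenvectorUnitary : Matrix m m ℂ))
      = (E * (hA.eigenvectorUnitary : Matrix m m ℂ)) * diagonal (RCLike.ofReal ∘ f ∘ hA.eigenvalues)
      * (star hA.eigenvectorUnitary : Matrix m m ℂ) := by simp only [mul_assoc]
  rw [this, trace_mul_cycle, ← mul_assoc, trace]
  refine Finset.sum_congr rfl fun i _ => ?_
  rw [diag_apply, mul_diagonal, entry_conj hA E i]
  simp [mul_comm]


lemma quad_eigen (i : m) : star (evec hA i) ⬝ᵥ A *ᵥ evec hA i = (hA.eigenvalues i : ℂ) := by
  unfold evec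
  rw [hA.mulVec_eigenvectorBasis]
  rw [dotProduct_smul]
  have := evec_unit hA i
  unfold evec at this
  rw [this]
  simp [RCLike.real_smul_eq_coe_mul]

section quad
variable (f : ℝ → ℝ) (v : m → ℂ)

lemma star_vecMul_unitary :
    star v ᵥ* (hA.eigenvectorUnitary : Matrix m m ℂ)
      = star ((star hA.eigenvectorUnitary : Matrix m m ℂ) *ᵥ v) := by
  rw [star_mulVec, ← star_eq_conjTranspose, star_star]

lemma quad_cfc :
    star v ⬝ᵥ (hA.cfc f) *ᵥ v
      = ∑ i, (f (hA.eigenvalues i) : ℂ)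
          * (Complex.normSq (((star hA.eigenvectorUnitary : Matrix m m ℂ) *ᵥ v) i) : ℝ) := by
  unfold Matrix.IsHermitian.cfc
  simp only [Unitary.conjStarAlgAut_apply]
  rw [← mulVec_mulVec, ← mulVec_mulVec, dotProduct_mulVec, star_vecMul_unitary hA]
  simp only [dotProduct, mulVec_diagonal, Pi.star_apply, Function.comp_apply]
  refine Finset.sum_congr rfl fun i _ => ?_
  simp only [RCLike.star_def]
  rw [mul_left_comm, ← Complex.normSq_eq_conj_mul_self]
  norm_cast
  exact (Complex.ofReal_mul _ _).symm

end quad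




variable {A : Matrix m m ℂ} (hA : A.IsHermitian)

lemma dot_self_eq_sum_normSq (v : m → ℂ) :
    star v ⬝ᵥ v
      = ((∑ i, Complex.normSq (((star hA.eigenvectorUnitary : Matrix m m ℂ) *ᵥ v) i) : ℝ) : ℂ) := by
  have h2 : (hA.eigenvectorUnitary : Matrix m m ℂ) * (star hA.eigenvectorUnitary : Matrix m m ℂ) = 1 :=
    Unitary.coe_mul_star_self hA.eigenvectorUnitary
  have key : star v ⬝ᵥ v
      = star ((star hA.eigenvectorUnitary : Matrix m m ℂ) *ᵥ v)
          ⬝ᵥ ((star hA.eigenvectorUnitary : Matrix m m ℂ) *ᵥ v) := by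
    rw [← star_vecMul_unitary hA, ← dotProduct_mulVec, mulVec_mulVec, h2, one_mulVec]
  rw [key]
  simp only [dotProduct, Pi.star_apply]
  push_cast
  refine Finset.sum_congr rfl fun i _ => ?_
  simp only [RCLike.star_def]
  rw [← Complex.normSq_eq_conj_mul_self]

lemma quad_cfc_re_le {f : ℝ → ℝ} (hf : ∀ x, |f x| ≤ 1) (v : m → ℂ) :
    |(star v ⬝ᵥ (hA.cfc f) *ᵥ v).re| ≤ (star v ⬝ᵥ v).re := by
  rw [quad_cfc hA f v, dot_self_eq_sum_normSq hA v]
  have : (∑ i, (f (hA.eigenvalues i) : ℂ)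
      * (Complex.normSq (((star hA.eigenvectorUnitary : Matrix m m ℂ) *ᵥ v) i) : ℝ)).re
      = ∑ i, f (hA.eigenvalues i)
      * Complex.normSq (((star hA.eigenvectorUnitary : Matrix m m ℂ) *ᵥ v) i) := by
    rw [Complex.re_sum]
    refine Finset.sum_congr rfl fun i _ => ?_
    rw [← Complex.ofReal_mul, Complex.ofReal_re]
  rw [this, Complex.ofReal_re]
  calc |∑ i, f (hA.eigenvalues i)
      * Complex.normSq (((star hA.eigenvectorUnitary : Matrix m m ℂ) *ᵥ v) i)|
      ≤ ∑ i, |f (hA.eigenvalues i)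
      * Complex.normSq (((star hA.eigenvectorUnitary : Matrix m m ℂ) *ᵥ v) i)| :=
        Finset.abs_sum_le_sum_abs _ _
    _ ≤ ∑ i, Complex.normSq (((star hA.eigenvectorUnitary : Matrix m m ℂ) *ᵥ v) i) := by
        refine Finset.sum_le_sum fun i _ => ?_
        rw [abs_mul, abs_of_nonneg (Complex.normSq_nonneg _)]
        exact mul_le_of_le_one_left (Complex.normSq_nonneg _) (hf _)


end FvdG

namespace Matrix.PosSemidef

lemma posSemidef_sqrt {A : Matrix m m ℂ} (hA : A.PosSemidef) : hA.sqrt.PosSemidef := by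
  rw [FvdG.sqrt_eq_cfc]
  exact FvdG.cfc_posSemidef hA.1 _ Real.sqrt_nonneg

lemma sqrt_mul_self {A : Matrix m m ℂ} (hA : A.PosSemidef) : hA.sqrt * hA.sqrt = A := by
  rw [FvdG.sqrt_eq_cfc, FvdG.cfc_mul]
  conv_rhs => rw [← FvdG.cfc_id hA.1]
  exact FvdG.cfc_congr hA.1 fun i => Real.mul_self_sqrt (hA.eigenvalues_nonneg i)

open scoped MatrixOrder in
lemma eq_sqrt_of_sq_eq {A B : Matrix m m ℂ} (hB : B.PosSemidef) (hA : A.PosSemidef)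
    (h : B ^ 2 = A) : B = hA.sqrt := by
  have e : CFC.sqrt A = B := CFC.sqrt_unique (by rw [← h, sq]) (nonneg_iff_posSemidef.mpr hB)
  rw [← e, CFC.sqrt_eq_cfc, cfc_nnreal_eq_real _ A (nonneg_iff_posSemidef.mpr hA), hA.1.cfc_eq,
    FvdG.sqrt_eq_cfc]
  exact FvdG.cfc_congr hA.1 fun i => by simp [hA.eigenvalues_nonneg i]

end Matrix.PosSemidef

namespace FvdG
open Matrix ComplexOrder
variable {A : Matrix m m ℂ} (hA : A.IsHermitian)

/-- trace norm as a sum of square roots of eigenvalues of `AᴴA` -/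
lemma traceNorm_eq_sum (X : Matrix m m ℂ) :
    traceNorm X = ∑ i, Real.sqrt ((posSemidef_conjTranspose_mul_self X).1.eigenvalues i) := by
  unfold traceNorm
  rw [sqrt_eq_cfc, trace_cfc]
  rw [Complex.re_sum]
  exact Finset.sum_congr rfl fun i _ => Complex.ofReal_re _

lemma traceNorm_nonneg (X : Matrix m m ℂ) : 0 ≤ traceNorm X := by
  rw [traceNorm_eq_sum]
  exact Finset.sum_nonneg fun i _ => Real.sqrt_nonneg _

/-- for Hermitian `M`, the trace norm is the sum of the absolute values of eigenvalues -/
lemma traceNorm_hermitian (hM : A.IsHermitian) :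
    traceNorm A = ∑ i, |hM.eigenvalues i| := by
  have h1 : (hM.cfc (fun x => |x|)).PosSemidef := cfc_posSemidef hM _ (fun x => abs_nonneg x)
  have h2 : (hM.cfc fun x => |x|) ^ 2 = Aᴴ * A := by
    rw [cfc_sq]
    have : hM.cfc (fun x => |x| * |x|) = hM.cfc (fun x => x * x) :=
      cfc_congr hM fun i => abs_mul_abs_self _
    rw [this, ← cfc_mul, cfc_id, hM.eq]
  have h3 := h1.eq_sqrt_of_sq_eq (posSemidef_conjTranspose_mul_self A) h2
  unfold traceNorm
  rw [← h3, trace_cfc, Complex.re_sum]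
  exact Finset.sum_congr rfl fun i _ => Complex.ofReal_re _

/-- Cauchy–Schwarz for the dot product -/
lemma dot_cs {ι : Type*} [Fintype ι] (a b : ι → ℂ) :
    ‖star a ⬝ᵥ b‖
      ≤ Real.sqrt (star a ⬝ᵥ a).re * Real.sqrt (star b ⬝ᵥ b).re := by
  classical
  have hinner : ∀ x y : ι → ℂ,
      (inner ℂ ((WithLp.equiv 2 (ι → ℂ)).symm x : EuclideanSpace ℂ ι)
        ((WithLp.equiv 2 (ι → ℂ)).symm y) : ℂ) = star x ⬝ᵥ y := fun x y => by
    simp [PiLp.inner_apply, dotProduct, RCLike.inner_apply, mul_comm]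
  set a' : EuclideanSpace ℂ ι := (WithLp.equiv 2 _).symm a with ha'
  set b' : EuclideanSpace ℂ ι := (WithLp.equiv 2 _).symm b with hb'
  have hna : ‖a'‖ = Real.sqrt (star a ⬝ᵥ a).re := by
    rw [norm_eq_sqrt_re_inner (𝕜 := ℂ), hinner a a]
    rfl
  have hnb : ‖b'‖ = Real.sqrt (star b ⬝ᵥ b).re := by
    rw [norm_eq_sqrt_re_inner (𝕜 := ℂ), hinner b b]
    rfl
  calc ‖star a ⬝ᵥ b‖ = ‖(inner ℂ a' b' : ℂ)‖ := by
        rw [hinner a b]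
    _ ≤ ‖a'‖ * ‖b'‖ := norm_inner_le_norm _ _
    _ = _ := by rw [hna, hnb]

/-- the real part of the trace is at most the trace norm -/
lemma dot_mulVec_self (X : Matrix m m ℂ) (v : m → ℂ) :
    star (X *ᵥ v) ⬝ᵥ (X *ᵥ v) = star v ⬝ᵥ (Xᴴ * X) *ᵥ v := by
  rw [star_mulVec, dotProduct_mulVec, vecMul_vecMul, ← dotProduct_mulVec]

lemma re_trace_le_traceNorm (X : Matrix m m ℂ) : (X.trace).re ≤ traceNorm X := by
  have hG := posSemidef_conjTranspose_mul_self X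
  rw [trace_eq_sum_quad hG.1 X, traceNorm_eq_sum, Complex.re_sum]
  refine Finset.sum_le_sum fun i _ => ?_
  have hunit : star (evec hG.1 i) ⬝ᵥ evec hG.1 i = 1 := evec_unit hG.1 i
  have heig : star (evec hG.1 i) ⬝ᵥ (Xᴴ * X) *ᵥ evec hG.1 i = (hG.1.eigenvalues i : ℂ) :=
    quad_eigen hG.1 i
  calc (star (evec hG.1 i) ⬝ᵥ X *ᵥ evec hG.1 i).re
      ≤ ‖star (evec hG.1 i) ⬝ᵥ X *ᵥ evec hG.1 i‖ := Complex.re_le_norm _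
    _ ≤ Real.sqrt (star (evec hG.1 i) ⬝ᵥ evec hG.1 i).re
        * Real.sqrt (star (X *ᵥ evec hG.1 i) ⬝ᵥ (X *ᵥ evec hG.1 i)).re := dot_cs _ _
    _ = Real.sqrt (hG.1.eigenvalues i) := by
        rw [hunit, dot_mulVec_self, heig]
        simp
    _ = _ := rfl

/-- trace of a product of PSD matrices is nonnegative -/
lemma psd_trace_re_nonneg {M : Matrix m m ℂ} (hM : M.PosSemidef) : 0 ≤ (M.trace).re := by
  rw [trace, Complex.re_sum]
  refine Finset.sum_nonneg fun i _ => ?_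
  have h := hM.dotProduct_mulVec_nonneg (Pi.single i 1)
  have hd : star (Pi.single i 1) ⬝ᵥ M *ᵥ Pi.single i 1 = M i i := by
    simp [dotProduct, mulVec, Pi.single_apply, star_apply]
  rw [hd] at h
  exact (RCLike.nonneg_iff.mp h).1

lemma re_trace_mul_nonneg {B C : Matrix m m ℂ} (hB : B.PosSemidef) (hC : C.PosSemidef) :
    0 ≤ ((B * C).trace).re := by
  have hs : B = hB.sqrt * hB.sqrt := hB.sqrt_mul_self.symm
  have h1 : (B * C).trace = (hB.sqrt * C * hB.sqrt).trace := by
    conv_lhs => rw [hs]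
    rw [mul_assoc, trace_mul_comm]
  have h2 : (hB.sqrt * C * hB.sqrt).PosSemidef := by
    have := hC.mul_mul_conjTranspose_same hB.sqrt
    rwa [hB.posSemidef_sqrt.1.eq] at this
  rw [h1]
  exact psd_trace_re_nonneg h2

/-- Frobenius Cauchy–Schwarz -/
lemma trace_conjTranspose_mul_eq_dot (M N : Matrix m m ℂ) :
    (Mᴴ * N).trace = star (fun p : m × m => M p.1 p.2) ⬝ᵥ (fun p : m × m => N p.1 p.2) := by
  rw [trace, dotProduct, Fintype.sum_prod_type]
  simp only [diag_apply, mul_apply, conjTranspose_apply, Pi.star_apply]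
  rw [Finset.sum_comm]

lemma frob_cs (M N : Matrix m m ℂ) :
    ((Mᴴ * N).trace).re ≤ Real.sqrt ((Mᴴ * M).trace).re * Real.sqrt ((Nᴴ * N).trace).re := by
  rw [trace_conjTranspose_mul_eq_dot M N, trace_conjTranspose_mul_eq_dot M M,
    trace_conjTranspose_mul_eq_dot N N]
  calc (star (fun p : m × m => M p.1 p.2) ⬝ᵥ (fun p : m × m => N p.1 p.2)).re
      ≤ ‖star (fun p : m × m => M p.1 p.2) ⬝ᵥ (fun p : m × m => N p.1 p.2)‖ :=
        Complex.re_le_norm _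
    _ ≤ _ := dot_cs _ _

end FvdG


namespace FvdG
open Matrix ComplexOrder

lemma abs_sign_le_one (x : ℝ) : |Real.sign x| ≤ 1 := by
  rcases lt_trichotomy x 0 with h | h | h
  · rw [Real.sign_of_neg h]; norm_num
  · rw [h, Real.sign_zero]; norm_num
  · rw [Real.sign_of_pos h]; norm_num

lemma sign_mul_self (x : ℝ) : Real.sign x * x = |x| := by
  rcases lt_trichotomy x 0 with h | h | h
  · rw [Real.sign_of_neg h, abs_of_neg h]; ring
  · simp [h]
  · rw [Real.sign_of_pos h, abs_of_pos h]; ring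

variable {ρ₀ ρ₁ : Matrix m m ℂ} (h₀ : IsDensity ρ₀) (h₁ : IsDensity ρ₁)

lemma lower_bound : 1 - fid h₀.1 h₁.1 ≤ traceDist ρ₀ ρ₁ := by
  classical
  set R₀ := h₀.1.sqrt with hR₀def
  set R₁ := h₁.1.sqrt with hR₁def
  have hR₀ : R₀.PosSemidef := h₀.1.posSemidef_sqrt
  have hR₁ : R₁.PosSemidef := h₁.1.posSemidef_sqrt
  have hR₀sq : R₀ * R₀ = ρ₀ := h₀.1.sqrt_mul_self
  have hR₁sq : R₁ * R₁ = ρ₁ := h₁.1.sqrt_mul_self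
  have hS : (R₀ - R₁).IsHermitian := hR₀.1.sub hR₁.1
  have hD : (ρ₀ - ρ₁).IsHermitian := h₀.1.1.sub h₁.1.1
  set E := hS.cfc Real.sign with hEdef
  have stepA : ((E * (ρ₀ - ρ₁)).trace).re ≤ traceNorm (ρ₀ - ρ₁) := by
    have htr : (E * (ρ₀ - ρ₁)).trace
        = ∑ i, ((hD.eigenvalues i : ℂ) * (star (evec hD i) ⬝ᵥ E *ᵥ evec hD i)) := by
      have h' := trace_mul_cfc hD E (fun x => x)
      rw [cfc_id hD] at h'
      exact h' 
    rw [htr, Complex.re_sum, traceNorm_hermitian hD]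
    refine Finset.sum_le_sum fun i _ => ?_
    have hq := quad_cfc_re_le hS abs_sign_le_one (evec hD i)
    rw [evec_unit hD i] at hq
    simp only [Complex.one_re] at hq
    have hre : ((hD.eigenvalues i : ℂ) * (star (evec hD i) ⬝ᵥ E *ᵥ evec hD i)).re
        = hD.eigenvalues i * (star (evec hD i) ⬝ᵥ E *ᵥ evec hD i).re := by
      simp [Complex.mul_re]
    rw [hre]
    calc hD.eigenvalues i * (star (evec hD i) ⬝ᵥ E *ᵥ evec hD i).re
        ≤ |hD.eigenvalues i * (star (evec hD i) ⬝ᵥ E *ᵥ evec hD i).re| := le_abs_self _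
      _ = |hD.eigenvalues i| * |(star (evec hD i) ⬝ᵥ E *ᵥ evec hD i).re| := abs_mul _ _
      _ ≤ |hD.eigenvalues i| * 1 := mul_le_mul_of_nonneg_left hq (abs_nonneg _)
      _ = _ := mul_one _
  have h2D : (R₀ - R₁) * (R₀ + R₁) + (R₀ + R₁) * (R₀ - R₁) = (ρ₀ - ρ₁) + (ρ₀ - ρ₁) := by
    simp only [sub_mul, mul_add, add_mul, mul_sub, hR₀sq, hR₁sq]
    abel
  have hES : E * (R₀ - R₁) = hS.cfc fun x => |x| := by
    have h' := cfc_mul hS Real.sign (fun x => x)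
    rw [cfc_id hS] at h'
    rw [hEdef, h']
    exact cfc_congr hS fun i => sign_mul_self _
  have hSE : (R₀ - R₁) * E = hS.cfc fun x => |x| := by
    have h' := cfc_mul hS (fun x => x) Real.sign
    rw [cfc_id hS] at h'
    rw [hEdef, h']
    exact cfc_congr hS fun i => by rw [mul_comm]; exact sign_mul_self _
  have stepB : (E * (ρ₀ - ρ₁)).trace = ((hS.cfc fun x => |x|) * (R₀ + R₁)).trace := by
    have t1 : (E * ((ρ₀ - ρ₁) + (ρ₀ - ρ₁))).trace
        = ((hS.cfc fun x => |x|) * (R₀ + R₁)).trace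
        + ((hS.cfc fun x => |x|) * (R₀ + R₁)).trace := by
      rw [← h2D, mul_add, trace_add]
      congr 1
      · rw [← mul_assoc, hES]
      · rw [← mul_assoc, trace_mul_cycle, hSE]
    have t2 : (E * ((ρ₀ - ρ₁) + (ρ₀ - ρ₁))).trace
        = (E * (ρ₀ - ρ₁)).trace + (E * (ρ₀ - ρ₁)).trace := by
      rw [mul_add, trace_add]
    have h2 := t2.symm.trans t1
    have h3 : (2 : ℂ) * (E * (ρ₀ - ρ₁)).trace
        = 2 * ((hS.cfc fun x => |x|) * (R₀ + R₁)).trace := by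
      rw [two_mul, two_mul, h2]
    exact mul_left_cancel₀ two_ne_zero h3
  have stepC : (∑ i, hS.eigenvalues i ^ 2)
      ≤ (((hS.cfc fun x => |x|) * (R₀ + R₁)).trace).re := by
    rw [trace_mul_comm, trace_mul_cfc hS (R₀ + R₁) _, Complex.re_sum]
    refine Finset.sum_le_sum fun i _ => ?_
    have hv0 : star (evec hS i) ⬝ᵥ (R₀ - R₁) *ᵥ evec hS i = (hS.eigenvalues i : ℂ) :=
      quad_eigen hS i
    have ha : 0 ≤ (star (evec hS i) ⬝ᵥ R₀ *ᵥ evec hS i).re := hR₀.re_dotProduct_nonneg _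
    have hb : 0 ≤ (star (evec hS i) ⬝ᵥ R₁ *ᵥ evec hS i).re := hR₁.re_dotProduct_nonneg _
    have hsplit : (star (evec hS i) ⬝ᵥ (R₀ + R₁) *ᵥ evec hS i).re
        = (star (evec hS i) ⬝ᵥ R₀ *ᵥ evec hS i).re
          + (star (evec hS i) ⬝ᵥ R₁ *ᵥ evec hS i).re := by
      rw [add_mulVec, dotProduct_add, Complex.add_re]
    have hlam : (star (evec hS i) ⬝ᵥ R₀ *ᵥ evec hS i).re
        - (star (evec hS i) ⬝ᵥ R₁ *ᵥ evec hS i).re = hS.eigenvalues i := by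
      have h' : (star (evec hS i) ⬝ᵥ (R₀ - R₁) *ᵥ evec hS i).re = hS.eigenvalues i := by
        rw [hv0]; exact Complex.ofReal_re _
      rw [← h', sub_mulVec, dotProduct_sub, Complex.sub_re]
    have habs : |hS.eigenvalues i| ≤ (star (evec hS i) ⬝ᵥ (R₀ + R₁) *ᵥ evec hS i).re := by
      rw [hsplit, ← hlam]
      exact abs_le.mpr ⟨by linarith, by linarith⟩
    have hre : ((((|hS.eigenvalues i| : ℝ)) : ℂ)
        * (star (evec hS i) ⬝ᵥ (R₀ + R₁) *ᵥ evec hS i)).re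
        = |hS.eigenvalues i| * (star (evec hS i) ⬝ᵥ (R₀ + R₁) *ᵥ evec hS i).re := by
      simp [Complex.mul_re]
    rw [hre]
    calc hS.eigenvalues i ^ 2 = |hS.eigenvalues i| * |hS.eigenvalues i| := by
          rw [← abs_mul, abs_mul_self, sq]
      _ ≤ |hS.eigenvalues i| * (star (evec hS i) ⬝ᵥ (R₀ + R₁) *ᵥ evec hS i).re :=
          mul_le_mul_of_nonneg_left habs (abs_nonneg _)
  have hSS : (((R₀ - R₁) * (R₀ - R₁)).trace).re = ∑ i, hS.eigenvalues i ^ 2 := by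
    have hmul : (R₀ - R₁) * (R₀ - R₁) = hS.cfc fun x => x * x := by
      have h' := cfc_mul hS (fun x => x) (fun x => x)
      rw [cfc_id hS] at h'
      exact h'
    rw [hmul, trace_cfc, Complex.re_sum]
    refine Finset.sum_congr rfl fun i _ => ?_
    rw [Complex.ofReal_re, sq]
  have hSS2 : (R₀ - R₁) * (R₀ - R₁) = ρ₀ + ρ₁ - (R₀ * R₁ + R₁ * R₀) := by
    simp only [sub_mul, mul_sub, hR₀sq, hR₁sq]
    abel
  have stepD : (∑ i, hS.eigenvalues i ^ 2) = 2 - 2 * ((R₀ * R₁).trace).re := by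
    rw [← hSS, hSS2]
    rw [trace_sub, trace_add, trace_add, h₀.2, h₁.2, trace_mul_comm R₁ R₀]
    simp [Complex.sub_re, Complex.add_re]
    ring
  have stepE : ((R₀ * R₁).trace).re ≤ fid h₀.1 h₁.1 := re_trace_le_traceNorm _
  have hTD : traceDist ρ₀ ρ₁ = traceNorm (ρ₀ - ρ₁) / 2 := rfl
  have hchain : 2 - 2 * fid h₀.1 h₁.1 ≤ traceNorm (ρ₀ - ρ₁) := by
    calc 2 - 2 * fid h₀.1 h₁.1 ≤ 2 - 2 * ((R₀ * R₁).trace).re := by linarith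
      _ = ∑ i, hS.eigenvalues i ^ 2 := stepD.symm
      _ ≤ (((hS.cfc fun x => |x|) * (R₀ + R₁)).trace).re := stepC
      _ = ((E * (ρ₀ - ρ₁)).trace).re := by rw [← stepB]
      _ ≤ traceNorm (ρ₀ - ρ₁) := stepA
  rw [hTD]
  linarith

end FvdG


namespace FvdG
open Matrix ComplexOrder

lemma contr_cs {W : Matrix m m ℂ} (hW : (1 - W * Wᴴ).PosSemidef) (A B : Matrix m m ℂ) :
    ((Wᴴ * (A * B)).trace).re
      ≤ Real.sqrt ((Aᴴ * A).trace).re * Real.sqrt ((Bᴴ * B).trace).re := by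
  have h1 : Wᴴ * (A * B) = (Aᴴ * W)ᴴ * B := by
    rw [conjTranspose_mul, conjTranspose_conjTranspose, mul_assoc]
  have h2 := frob_cs (Aᴴ * W) B
  rw [← h1] at h2
  refine h2.trans (mul_le_mul_of_nonneg_right ?_ (Real.sqrt_nonneg _))
  apply Real.sqrt_le_sqrt
  have e1 : (Aᴴ * W)ᴴ * (Aᴴ * W) = Wᴴ * (A * Aᴴ) * W := by
    rw [conjTranspose_mul, conjTranspose_conjTranspose]
    simp only [mul_assoc]
  have e2 : (Wᴴ * (A * Aᴴ) * W).trace = ((A * Aᴴ) * (W * Wᴴ)).trace := by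
    rw [trace_mul_cycle, trace_mul_comm]
  have e3 : 0 ≤ (((A * Aᴴ) * (1 - W * Wᴴ)).trace).re :=
    re_trace_mul_nonneg (posSemidef_self_mul_conjTranspose A) hW
  have e4 : ((A * Aᴴ) * (1 - W * Wᴴ)).trace
      = (A * Aᴴ).trace - ((A * Aᴴ) * (W * Wᴴ)).trace := by
    rw [mul_sub, mul_one, trace_sub]
  have e5 : ((A * Aᴴ).trace).re = ((Aᴴ * A).trace).re := by rw [trace_mul_comm]
  rw [e1, e2]
  rw [e4] at e3
  rw [Complex.sub_re] at e3
  linarith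

end FvdG


namespace FvdG
open Matrix ComplexOrder

lemma max_eq_half (x : ℝ) : max x 0 = (x + |x|) / 2 := by
  rcases le_total 0 x with h | h
  · rw [max_eq_left h, abs_of_nonneg h]; ring
  · rw [max_eq_right h, abs_of_nonpos h]; ring

variable {ρ₀ ρ₁ : Matrix m m ℂ} (h₀ : IsDensity ρ₀) (h₁ : IsDensity ρ₁)

set_option maxHeartbeats 1000000 in
lemma upper_bound : traceDist ρ₀ ρ₁ ≤ Real.sqrt (1 - fid h₀.1 h₁.1 ^ 2) := by
  classical
  set R₀ := h₀.1.sqrt with hR₀def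
  set R₁ := h₁.1.sqrt with hR₁def
  have hR₀ : R₀.PosSemidef := h₀.1.posSemidef_sqrt
  have hR₁ : R₁.PosSemidef := h₁.1.posSemidef_sqrt
  have hR₀sq : R₀ * R₀ = ρ₀ := h₀.1.sqrt_mul_self
  have hR₁sq : R₁ * R₁ = ρ₁ := h₁.1.sqrt_mul_self
  have hD : (ρ₀ - ρ₁).IsHermitian := h₀.1.1.sub h₁.1.1
  set g : ℝ → ℝ := fun x => if 0 ≤ x then 1 else 0 with hgdef
  set P := hD.cfc g with hPdef
  set Q := hD.cfc (fun x => 1 - g x) with hQdef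
  have hP : P.PosSemidef := cfc_posSemidef hD _ fun x => by
    by_cases h : 0 ≤ x <;> simp [hgdef, h]
  have hQ : Q.PosSemidef := cfc_posSemidef hD _ fun x => by
    by_cases h : 0 ≤ x <;> simp [hgdef, h]
  have hPQ : P + Q = 1 := by
    rw [hPdef, hQdef, cfc_add]
    rw [← cfc_one hD]
    exact cfc_congr hD fun i => by ring
  have hPP : P * P = P := by
    rw [hPdef, cfc_mul]
    exact cfc_congr hD fun i => by by_cases h : 0 ≤ hD.eigenvalues i <;> simp [hgdef, h]
  have hQQ : Q * Q = Q := by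
    rw [hQdef, cfc_mul]
    exact cfc_congr hD fun i => by by_cases h : 0 ≤ hD.eigenvalues i <;> simp [hgdef, h]
  set p := ((P * ρ₀).trace).re with hpdef
  set q := ((P * ρ₁).trace).re with hqdef
  -- p - q = sum of positive parts of eigenvalues
  have hPD : ((P * (ρ₀ - ρ₁)).trace).re = ∑ i, max (hD.eigenvalues i) 0 := by
    have h' := cfc_mul hD g (fun x => x)
    rw [cfc_id hD] at h'
    rw [← hPdef] at h'
    rw [h', trace_cfc, Complex.re_sum]
    refine Finset.sum_congr rfl fun i _ => ?_
    rw [Complex.ofReal_re]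
    by_cases h : 0 ≤ hD.eigenvalues i
    · simp [hgdef, h, max_eq_left h]
    · simp [hgdef, h, max_eq_right (le_of_not_ge h)]
  have hpq : p - q = ∑ i, max (hD.eigenvalues i) 0 := by
    rw [← hPD, mul_sub, trace_sub, Complex.sub_re]
  have hsum0 : ∑ i, hD.eigenvalues i = 0 := by
    have h4 := trace_cfc hD (fun x => x)
    rw [cfc_id hD] at h4
    have h1 : ((ρ₀ - ρ₁).trace) = 0 := by rw [trace_sub, h₀.2, h₁.2, sub_self]
    rw [h1] at h4
    have h5 := congrArg Complex.re h4.symm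
    rw [Complex.re_sum, Complex.zero_re] at h5
    simpa using h5
  have hT : traceDist ρ₀ ρ₁ = p - q := by
    show traceNorm (ρ₀ - ρ₁) / 2 = p - q
    rw [traceNorm_hermitian hD, hpq]
    rw [Finset.sum_congr rfl fun i _ => max_eq_half (hD.eigenvalues i)]
    rw [← Finset.sum_div, Finset.sum_add_distrib, hsum0, zero_add]
  -- bounds on p and q
  have hq0 : 0 ≤ q := re_trace_mul_nonneg hP h₁.1
  have hp0 : 0 ≤ p := re_trace_mul_nonneg hP h₀.1
  have hQρ₀ : ((Q * ρ₀).trace).re = 1 - p := by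
    have h5 : P * ρ₀ + Q * ρ₀ = ρ₀ := by rw [← add_mul, hPQ, one_mul]
    have h6 := congrArg (fun M : Matrix m m ℂ => (M.trace).re) h5
    simp only [trace_add, Complex.add_re] at h6
    rw [h₀.2] at h6
    simp only [Complex.one_re] at h6
    linarith [h6]
  have hQρ₁ : ((Q * ρ₁).trace).re = 1 - q := by
    have h5 : P * ρ₁ + Q * ρ₁ = ρ₁ := by rw [← add_mul, hPQ, one_mul]
    have h6 := congrArg (fun M : Matrix m m ℂ => (M.trace).re) h5
    simp only [trace_add, Complex.add_re] at h6
    rw [h₁.2] at h6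
    simp only [Complex.one_re] at h6
    linarith [h6]
  have hp1 : p ≤ 1 := by
    have := re_trace_mul_nonneg hQ h₀.1
    rw [hQρ₀] at this
    linarith
  have hq1 : q ≤ 1 := by
    have := re_trace_mul_nonneg hQ h₁.1
    rw [hQρ₁] at this
    linarith
  -- the partial isometry W
  set X := R₀ * R₁ with hXdef
  have hG := posSemidef_conjTranspose_mul_self X
  set gN : ℝ → ℝ := fun x => if x = 0 then 0 else (Real.sqrt x)⁻¹ with hgN
  set N := hG.1.cfc gN with hNdef
  set W := X * N with hWdef
  have hNH : N.IsHermitian := cfc_hermitian hG.1 gN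
  have hWX : Wᴴ * X = hG.sqrt := by
    rw [hWdef, conjTranspose_mul, hNH.eq]
    have h' := cfc_mul hG.1 gN (fun x => x)
    rw [cfc_id hG.1] at h'
    rw [← hNdef] at h'
    rw [mul_assoc, h', sqrt_eq_cfc]
    refine cfc_congr hG.1 fun i => ?_
    rcases eq_or_lt_of_le (hG.eigenvalues_nonneg i) with h | h
    · simp [hgN, ← h]
    · have hne : hG.1.eigenvalues i ≠ 0 := ne_of_gt h
      have hs : Real.sqrt (hG.1.eigenvalues i) ≠ 0 := by positivity
      rw [hgN]
      simp only [hne, if_false]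
      field_simp
      exact (Real.sq_sqrt h.le).symm
  have hFre : ((Wᴴ * X).trace).re = fid h₀.1 h₁.1 := by
    rw [hWX]
    rfl
  -- W is a contraction
  have hNN := cfc_mul hG.1 gN gN
  rw [← hNdef] at hNN
  have hPi : W * Wᴴ = X * (hG.1.cfc fun x => gN x * gN x) * Xᴴ := by
    rw [hWdef, conjTranspose_mul, hNH.eq, ← hNN]
    simp only [mul_assoc]
  have hinner : (hG.1.cfc fun x => gN x * gN x) * (Xᴴ * X)
      * (hG.1.cfc fun x => gN x * gN x) = hG.1.cfc fun x => gN x * gN x := by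
    have h1 := cfc_mul hG.1 (fun x => gN x * gN x) (fun x => x)
    rw [cfc_id hG.1] at h1
    rw [h1, cfc_mul]
    refine cfc_congr hG.1 fun i => ?_
    rcases eq_or_lt_of_le (hG.eigenvalues_nonneg i) with h | h
    · simp [hgN, ← h]
    · have hne : hG.1.eigenvalues i ≠ 0 := ne_of_gt h
      have hs : Real.sqrt (hG.1.eigenvalues i) ≠ 0 := by positivity
      rw [hgN]
      simp only [hne, if_false]
      field_simp
      exact (Real.sq_sqrt h.le).symm
  have hproj : (W * Wᴴ) * (W * Wᴴ) = W * Wᴴ := by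
    rw [hPi]
    have : X * (hG.1.cfc fun x => gN x * gN x) * Xᴴ * (X * (hG.1.cfc fun x => gN x * gN x) * Xᴴ)
        = X * ((hG.1.cfc fun x => gN x * gN x) * (Xᴴ * X) * (hG.1.cfc fun x => gN x * gN x)) * Xᴴ := by
      simp only [mul_assoc]
    rw [this, hinner]
  have hPiH : (W * Wᴴ).IsHermitian := isHermitian_mul_conjTranspose_self W
  have hcontr : (1 - W * Wᴴ).PosSemidef := by
    have h1 : (1 - W * Wᴴ)ᴴ * (1 - W * Wᴴ) = 1 - W * Wᴴ := by
      rw [conjTranspose_sub, conjTranspose_one, hPiH.eq, mul_sub, mul_one, sub_mul,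
        one_mul, hproj]
      abel
    rw [← h1]
    exact posSemidef_conjTranspose_mul_self _
  -- split X
  have hXsplit : X = (R₀ * P) * (P * R₁) + (R₀ * Q) * (Q * R₁) := by
    have e₁ : (R₀ * P) * (P * R₁) = R₀ * (P * P) * R₁ := by simp only [mul_assoc]
    have e₂ : (R₀ * Q) * (Q * R₁) = R₀ * (Q * Q) * R₁ := by simp only [mul_assoc]
    rw [e₁, e₂, hPP, hQQ, hXdef]
    calc R₀ * R₁ = R₀ * (P + Q) * R₁ := by rw [hPQ, mul_one]
      _ = R₀ * P * R₁ + R₀ * Q * R₁ := by simp only [mul_add, add_mul]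
  -- trace computations for the four factors
  have t1 : (((R₀ * P)ᴴ * (R₀ * P)).trace).re = p := by
    rw [conjTranspose_mul, hP.1.eq, hR₀.1.eq]
    have e : (P * R₀) * (R₀ * P) = P * ρ₀ * P := by
      rw [show (P * R₀) * (R₀ * P) = P * (R₀ * R₀) * P by simp only [mul_assoc], hR₀sq]
    rw [e, trace_mul_cycle, hPP]
  have t2 : (((P * R₁)ᴴ * (P * R₁)).trace).re = q := by
    rw [conjTranspose_mul, hP.1.eq, hR₁.1.eq]
    have e : (R₁ * P) * (P * R₁) = R₁ * P * R₁ := by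
      rw [show (R₁ * P) * (P * R₁) = R₁ * (P * P) * R₁ by simp only [mul_assoc], hPP]
    rw [e, trace_mul_cycle, hR₁sq, trace_mul_comm]
  have t3 : (((R₀ * Q)ᴴ * (R₀ * Q)).trace).re = 1 - p := by
    rw [conjTranspose_mul, hQ.1.eq, hR₀.1.eq]
    have e : (Q * R₀) * (R₀ * Q) = Q * ρ₀ * Q := by
      rw [show (Q * R₀) * (R₀ * Q) = Q * (R₀ * R₀) * Q by simp only [mul_assoc], hR₀sq]
    rw [e, trace_mul_cycle, hQQ, hQρ₀]
  have t4 : (((Q * R₁)ᴴ * (Q * R₁)).trace).re = 1 - q := by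
    rw [conjTranspose_mul, hQ.1.eq, hR₁.1.eq]
    have e : (R₁ * Q) * (Q * R₁) = R₁ * Q * R₁ := by
      rw [show (R₁ * Q) * (Q * R₁) = R₁ * (Q * Q) * R₁ by simp only [mul_assoc], hQQ]
    rw [e, trace_mul_cycle, hR₁sq, trace_mul_comm, hQρ₁]
  -- fidelity bound
  have hFsplit : fid h₀.1 h₁.1
      ≤ Real.sqrt p * Real.sqrt q + Real.sqrt (1 - p) * Real.sqrt (1 - q) := by
    rw [← hFre]
    rw [hXsplit, mul_add, trace_add, Complex.add_re]
    have c1 := contr_cs hcontr (R₀ * P) (P * R₁)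
    have c2 := contr_cs hcontr (R₀ * Q) (Q * R₁)
    rw [t1, t2] at c1
    rw [t3, t4] at c2
    exact add_le_add c1 c2
  -- final real arithmetic
  have hF0 : 0 ≤ fid h₀.1 h₁.1 := traceNorm_nonneg _
  have hp1' : (0:ℝ) ≤ 1 - p := by linarith
  have hq1' : (0:ℝ) ≤ 1 - q := by linarith
  have key : 2 * (Real.sqrt p * Real.sqrt (1-p)) * (Real.sqrt q * Real.sqrt (1-q))
      ≤ p * (1-p) + q * (1-q) := by
    nlinarith [sq_nonneg (Real.sqrt p * Real.sqrt (1-p) - Real.sqrt q * Real.sqrt (1-q)),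
      Real.sq_sqrt hp0, Real.sq_sqrt hq0, Real.sq_sqrt hp1', Real.sq_sqrt hq1']
  have e1 : (Real.sqrt p * Real.sqrt q)^2 = p * q := by
    rw [mul_pow, Real.sq_sqrt hp0, Real.sq_sqrt hq0]
  have e2 : (Real.sqrt (1-p) * Real.sqrt (1-q))^2 = (1-p) * (1-q) := by
    rw [mul_pow, Real.sq_sqrt hp1', Real.sq_sqrt hq1']
  have e3 : (Real.sqrt p * Real.sqrt q + Real.sqrt (1-p) * Real.sqrt (1-q))^2
      = p * q + (1-p) * (1-q)
        + 2 * (Real.sqrt p * Real.sqrt (1-p)) * (Real.sqrt q * Real.sqrt (1-q)) := by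
    rw [add_sq, e1, e2]
    ring
  have hT2 : (p - q)^2
      ≤ 1 - (Real.sqrt p * Real.sqrt q + Real.sqrt (1-p) * Real.sqrt (1-q))^2 := by
    rw [e3]
    nlinarith [key]
  have hF2 : fid h₀.1 h₁.1 ^ 2
      ≤ (Real.sqrt p * Real.sqrt q + Real.sqrt (1-p) * Real.sqrt (1-q))^2 :=
    pow_le_pow_left₀ hF0 hFsplit 2
  have hTnn : 0 ≤ p - q := by
    rw [← hT]
    show 0 ≤ traceNorm (ρ₀ - ρ₁) / 2
    exact div_nonneg (traceNorm_nonneg _) (by norm_num)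
  rw [hT]
  calc p - q = Real.sqrt ((p - q)^2) := (Real.sqrt_sq hTnn).symm
    _ ≤ Real.sqrt (1 - fid h₀.1 h₁.1 ^ 2) := Real.sqrt_le_sqrt (by linarith)

end FvdG

/-- Fuchs–van de Graaf: `1 − F ≤ T ≤ √(1 − F²)`. -/
theorem fuchs_van_de_graaf
    {ρ₀ ρ₁ : Matrix m m ℂ} (h₀ : IsDensity ρ₀) (h₁ : IsDensity ρ₁) :
    1 - fid h₀.1 h₁.1 ≤ traceDist ρ₀ ρ₁ ∧
      traceDist ρ₀ ρ₁ ≤ Real.sqrt (1 - (fid h₀.1 h₁.1) ^ 2) :=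
  ⟨FvdG.lower_bound h₀ h₁, FvdG.upper_bound h₀ h₁⟩
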